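/- Let F : ℝⁿ → ℝ be twice continuously differentiable with L₂-Lipschitz Hessian, and let α ≥ L₂ with α > 0. Fix x ∈ ℝⁿ, g ∈ ℝⁿ, and a symmetric matrix Ĥ ∈ ℝ^{n×n}, and let x⁺ be a global minimizer over ℝⁿ of the model f̂(y) = ⟨g, y − x⟩ + (1/2)⟨y − x, Ĥ(y − x)⟩ + (α/6)‖y − x‖³. Then (α/36)‖x⁺ − x‖³ ≤ F(x) − F(x⁺) + √(16/(3α)) ‖∇F(x) − g‖^{3/2} + (24/α²) ‖∇²F(x) − Ĥ‖³, where the Hessian difference is measured in spectral norm. -/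

import Mathlib

/-!
Write `s = x⁺ - x` and `r = ‖s‖`. Along the line `t ↦ x + t s` the model is
`t ⟨g, s⟩ + (t²/2) ⟨s, Ĥ s⟩ + |t|³ (α/6) r³`, minimised at `t = 1`; comparing with `t = -1` and
using the first-order condition at `t = 1` bounds its linear-plus-quadratic part by `-(α/4) r³`.
The cubic Taylor bound `F(x⁺) ≤ F(x) + ⟨∇F(x), s⟩ + ½ ⟨s, ∇²F(x) s⟩ + (L₂/6) r³`, with the gradient
and Hessian errors bounded by Cauchy–Schwarz, then gives
`F(x) - F(x⁺) ≥ (α/12) r³ - ‖∇F(x) - g‖ r - ½ ‖∇²F(x) - Ĥ‖ r²`,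
and two Young inequalities each absorb one error term into `(α/36) r³`.
-/

open scoped BigOperators

/-- The spectral norm of a real square matrix: the operator norm of the associated
continuous linear endomorphism of Euclidean space. -/
noncomputable def specNorm {n : ℕ} (A : Matrix (Fin n) (Fin n) ℝ) : ℝ :=
  ‖Matrix.toEuclideanCLM (𝕜 := ℝ) A‖

open scoped RealInnerProductSpace
open Set Matrix

theorem mul_le_cube_add_rpow_three_halves {a r α : ℝ} (ha : 0 ≤ a) (hr : 0 ≤ r) (hα : 0 < α) :
    a * r ≤ α / 36 * r ^ 3 + √(16 / (3 * α)) * a ^ ((3 : ℝ) / 2) := by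
  obtain ⟨u, hu, rfl⟩ : ∃ u, 0 ≤ u ∧ a = u ^ 2 := ⟨√a, Real.sqrt_nonneg a, (Real.sq_sqrt ha).symm⟩
  have hu3 : (u ^ 2) ^ ((3 : ℝ) / 2) = u ^ 3 := by
    rw [← Real.rpow_natCast, ← Real.rpow_mul hu]; norm_num
  set t := √(3 * α)
  have ht : 0 < t := Real.sqrt_pos.2 (by positivity)
  have ht2 : t ^ 2 = 3 * α := Real.sq_sqrt (by positivity)
  have hct : √(16 / (3 * α)) * t = 4 := by
    rw [← Real.sqrt_mul (by positivity), div_mul_cancel₀ _ (by positivity)]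
    rw [show (16 : ℝ) = 4 ^ 2 by norm_num, Real.sqrt_sq (by norm_num)]
  -- `108 t (RHS - LHS) = (t r - 6 u)² (t r + 12 u)`
  have key : (α / 36 * r ^ 3 + √(16 / (3 * α)) * u ^ 3 - u ^ 2 * r) * (108 * t) =
      (t * r - 6 * u) ^ 2 * (t * r + 12 * u) := by
    linear_combination (108 * u ^ 3) * hct - (t * r ^ 3) * ht2
  rw [hu3, ← sub_nonneg, ← mul_nonneg_iff_of_pos_right (by positivity : (0 : ℝ) < 108 * t), key]
  positivity

theorem mul_sq_le_cube_add_cube {b r α : ℝ} (hb : 0 ≤ b) (hr : 0 ≤ r) (hα : 0 < α) :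
    b * r ^ 2 / 2 ≤ α / 36 * r ^ 3 + 24 / α ^ 2 * b ^ 3 := by
  -- `36 α² (RHS - LHS) = (α r - 12 b)² (α r + 6 b)`
  have key : (α / 36 * r ^ 3 + 24 / α ^ 2 * b ^ 3 - b * r ^ 2 / 2) * (36 * α ^ 2) =
      (α * r - 12 * b) ^ 2 * (α * r + 6 * b) := by
    field_simp
    ring
  rw [← sub_nonneg, ← mul_nonneg_iff_of_pos_right (by positivity : (0 : ℝ) < 36 * α ^ 2), key]
  positivity

theorem antitoneOn_Icc_of_hasDerivAt_nonpos {f f' : ℝ → ℝ} {a b : ℝ}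
    (hf : ∀ t, HasDerivAt f (f' t) t) (hf' : ∀ t ∈ Icc a b, f' t ≤ 0) :
    AntitoneOn f (Icc a b) :=
  antitoneOn_of_hasDerivWithinAt_nonpos (convex_Icc a b)
    (fun t _ => (hf t).continuousAt.continuousWithinAt) (fun t _ => (hf t).hasDerivWithinAt)
    (fun t ht => hf' t (interior_subset ht))

theorem le_taylor_two_of_deriv_le {φ φ' φ'' : ℝ → ℝ} {K : ℝ}
    (hφ : ∀ t, HasDerivAt φ (φ' t) t) (hφ' : ∀ t, HasDerivAt φ' (φ'' t) t)
    (hK : ∀ t ∈ Icc (0 : ℝ) 1, φ'' t ≤ φ'' 0 + t * K) :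
    φ 1 ≤ φ 0 + φ' 0 + φ'' 0 / 2 + K / 6 := by
  set e₁ : ℝ → ℝ := fun t => φ' t - (φ' 0 + t * φ'' 0 + t ^ 2 / 2 * K)
  set e₀ : ℝ → ℝ := fun t => φ t - (φ 0 + t * φ' 0 + t ^ 2 / 2 * φ'' 0 + t ^ 3 / 6 * K)
  have he₁ : ∀ t, HasDerivAt e₁ (φ'' t - (φ'' 0 + t * K)) t := fun t => by
    have hp := (((hasDerivAt_id t).mul_const (φ'' 0)).const_add (φ' 0)).add
      (((hasDerivAt_pow 2 t).div_const 2).mul_const K)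
    exact ((hφ' t).sub hp).congr_deriv (by simp)
  have he₀ : ∀ t, HasDerivAt e₀ (e₁ t) t := fun t => by
    have hp := ((((hasDerivAt_id t).mul_const (φ' 0)).const_add (φ 0)).add
      (((hasDerivAt_pow 2 t).div_const 2).mul_const (φ'' 0))).add
      (((hasDerivAt_pow 3 t).div_const 6).mul_const K)
    exact ((hφ t).sub hp).congr_deriv (by simp only [e₁]; ring)
  have h0 : (0 : ℝ) ∈ Icc (0 : ℝ) 1 := left_mem_Icc.2 zero_le_one
  have he₁_nonpos : ∀ t ∈ Icc (0 : ℝ) 1, e₁ t ≤ 0 := fun t ht => by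
    have := antitoneOn_Icc_of_hasDerivAt_nonpos he₁ (fun t ht => by linarith [hK t ht]) h0 ht ht.1
    simpa [e₁] using this
  have := antitoneOn_Icc_of_hasDerivAt_nonpos he₀ he₁_nonpos h0 (right_mem_Icc.2 zero_le_one)
    zero_le_one
  simp only [e₀] at this
  linarith

section LineDerivatives

variable {E G : Type*} [NormedAddCommGroup E] [NormedSpace ℝ E] [NormedAddCommGroup G]
  [NormedSpace ℝ G] {F : E → G} (x s : E) (t : ℝ)

theorem DifferentiableAt.hasDerivAt_add_smul (hF : DifferentiableAt ℝ F (x + t • s)) :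
    HasDerivAt (fun t : ℝ => F (x + t • s)) (fderiv ℝ F (x + t • s) s) t := by
  have hline : HasDerivAt (fun t : ℝ => x + t • s) s t := by
    simpa using ((hasDerivAt_id t).smul_const s).const_add x
  exact hF.hasFDerivAt.comp_hasDerivAt t hline

theorem ContDiff.hasDerivAt_fderiv_add_smul (hF : ContDiff ℝ 2 F) :
    HasDerivAt (fun t : ℝ => fderiv ℝ F (x + t • s) s)
      (iteratedFDeriv ℝ 2 F (x + t • s) ![s, s]) t := by
  have hF' : DifferentiableAt ℝ (fderiv ℝ F) (x + t • s) :=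
    ((hF.fderiv_right (m := 1) le_rfl).differentiable one_ne_zero).differentiableAt
  simpa [iteratedFDeriv_two_apply] using
    (hF'.hasDerivAt_add_smul x s t).clm_apply (hasDerivAt_const t s)

end LineDerivatives

theorem ContDiff.le_taylor_two_add {E : Type*} [NormedAddCommGroup E] [NormedSpace ℝ E]
    {F : E → ℝ} (hF : ContDiff ℝ 2 F) (x s : E) {K : ℝ}
    (hK : ∀ t ∈ Icc (0 : ℝ) 1, iteratedFDeriv ℝ 2 F (x + t • s) ![s, s] ≤
      iteratedFDeriv ℝ 2 F x ![s, s] + t * K) :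
    F (x + s) ≤ F x + fderiv ℝ F x s + iteratedFDeriv ℝ 2 F x ![s, s] / 2 + K / 6 := by
  simpa using le_taylor_two_of_deriv_le
    (fun t => ((hF.differentiable two_ne_zero).differentiableAt).hasDerivAt_add_smul x s t)
    (hF.hasDerivAt_fderiv_add_smul x s) (by simpa using hK)

section CubicModel

variable {E : Type*} [NormedAddCommGroup E] [InnerProductSpace ℝ E]

noncomputable def cubicModel (g : E) (H : E →L[ℝ] E) (α : ℝ) (v : E) : ℝ :=
  ⟪g, v⟫ + 1 / 2 * ⟪v, H v⟫ + α / 6 * ‖v‖ ^ 3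

theorem cubicModel_smul (g : E) (H : E →L[ℝ] E) (α t : ℝ) (v : E) :
    cubicModel g H α (t • v) =
      t * ⟪g, v⟫ + t ^ 2 * (⟪v, H v⟫ / 2) + |t| ^ 3 * (α / 6 * ‖v‖ ^ 3) := by
  simp only [cubicModel, map_smul, inner_smul_left, inner_smul_right, norm_smul,
    Real.norm_eq_abs, mul_pow, conj_trivial]
  ring

theorem add_half_le_of_forall_le_cubic {A Q c : ℝ}
    (h : ∀ t : ℝ, A + Q / 2 + c ≤ t * A + t ^ 2 * (Q / 2) + |t| ^ 3 * c) :
    A + Q / 2 ≤ -(3 / 2) * c := by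
  have hA : A ≤ 0 := by linarith [h (-1)]
  have hmin : IsLocalMin (fun t : ℝ => t * A + t ^ 2 * (Q / 2) + t ^ 3 * c) 1 := by
    filter_upwards [eventually_gt_nhds zero_lt_one] with t ht
    simpa [abs_of_pos ht] using h t
  have hderiv : HasDerivAt (fun t : ℝ => t * A + t ^ 2 * (Q / 2) + t ^ 3 * c)
      (A + Q + 3 * c) 1 :=
    ((((hasDerivAt_id 1).mul_const A).add ((hasDerivAt_pow 2 1).mul_const (Q / 2))).add
      ((hasDerivAt_pow 3 1).mul_const c)).congr_deriv (by simp; ring)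
  have hcrit : A + Q + 3 * c = 0 := hderiv.deriv ▸ hmin.deriv_eq_zero
  linarith

theorem inner_add_half_inner_le_of_isMinOn_cubicModel {g : E} {H : E →L[ℝ] E} {α : ℝ} {v : E}
    (hv : IsMinOn (cubicModel g H α) univ v) :
    ⟪g, v⟫ + ⟪v, H v⟫ / 2 ≤ -(α / 4) * ‖v‖ ^ 3 := by
  have := add_half_le_of_forall_le_cubic (A := ⟪g, v⟫) (Q := ⟪v, H v⟫) (c := α / 6 * ‖v‖ ^ 3)
    fun t => by
      have h := isMinOn_iff.1 hv (t • v) (mem_univ _)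
      rw [cubicModel_smul, cubicModel] at h
      linarith
  linarith

end CubicModel

theorem sum_mul_eq_inner {ι : Type*} [Fintype ι] (u v : EuclideanSpace ℝ ι) :
    ∑ i, u i * v i = ⟪u, v⟫ := by
  simp [PiLp.inner_apply, mul_comm]

theorem sum_sum_mul_mul_eq_inner_toEuclideanCLM {ι : Type*} [Fintype ι] [DecidableEq ι]
    (A : Matrix ι ι ℝ) (v w : EuclideanSpace ℝ ι) :
    ∑ i, ∑ j, v i * A i j * w j = ⟪v, toEuclideanCLM (𝕜 := ℝ) A w⟫ := by
  simp [PiLp.inner_apply, Matrix.mulVec, dotProduct, Finset.mul_sum, mul_comm, mul_left_comm,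
    mul_assoc]

theorem inner_toEuclideanCLM_sub_inner_le {n : ℕ} (A B : Matrix (Fin n) (Fin n) ℝ)
    (v : EuclideanSpace ℝ (Fin n)) :
    ⟪v, toEuclideanCLM (𝕜 := ℝ) A v⟫ - ⟪v, toEuclideanCLM (𝕜 := ℝ) B v⟫ ≤
      specNorm (A - B) * ‖v‖ ^ 2 := by
  rw [← inner_sub_right, ← _root_.sub_apply, ← map_sub]
  calc _ ≤ ‖v‖ * ‖toEuclideanCLM (𝕜 := ℝ) (A - B) v‖ := real_inner_le_norm _ _
    _ ≤ ‖v‖ * (specNorm (A - B) * ‖v‖) := by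
      gcongr; exact ContinuousLinearMap.le_opNorm _ _
    _ = specNorm (A - B) * ‖v‖ ^ 2 := by ring

theorem inner_toEuclideanCLM_add_smul_le {n : ℕ}
    {H : EuclideanSpace ℝ (Fin n) → Matrix (Fin n) (Fin n) ℝ} {L : ℝ}
    (hH : ∀ x y, specNorm (H x - H y) ≤ L * ‖x - y‖) (x s : EuclideanSpace ℝ (Fin n)) {t : ℝ}
    (ht : 0 ≤ t) :
    ⟪s, toEuclideanCLM (𝕜 := ℝ) (H (x + t • s)) s⟫ ≤
      ⟪s, toEuclideanCLM (𝕜 := ℝ) (H x) s⟫ + t * (L * ‖s‖ ^ 3) := by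
  have hHt := hH (x + t • s) x
  rw [add_sub_cancel_left, norm_smul, Real.norm_of_nonneg ht] at hHt
  calc _ ≤ ⟪s, toEuclideanCLM (𝕜 := ℝ) (H x) s⟫ + specNorm (H (x + t • s) - H x) * ‖s‖ ^ 2 := by
        linarith [inner_toEuclideanCLM_sub_inner_le (H (x + t • s)) (H x) s]
    _ ≤ ⟪s, toEuclideanCLM (𝕜 := ℝ) (H x) s⟫ + L * (t * ‖s‖) * ‖s‖ ^ 2 := by gcongr
    _ = ⟪s, toEuclideanCLM (𝕜 := ℝ) (H x) s⟫ + t * (L * ‖s‖ ^ 3) := by ring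

theorem statement14_general {n : ℕ} (F : EuclideanSpace ℝ (Fin n) → ℝ) (hF : ContDiff ℝ 2 F)
    (HF : EuclideanSpace ℝ (Fin n) → Matrix (Fin n) (Fin n) ℝ)
    (hHF : ∀ (y : EuclideanSpace ℝ (Fin n)) (w₁ w₂ : EuclideanSpace ℝ (Fin n)),
      iteratedFDeriv ℝ 2 F y ![w₁, w₂] = ∑ i, ∑ j, w₁ i * HF y i j * w₂ j)
    (L₂ : ℝ)
    (hLip : ∀ x y : EuclideanSpace ℝ (Fin n), specNorm (HF x - HF y) ≤ L₂ * ‖x - y‖)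
    (α : ℝ) (hα : 0 < α) (hαL : L₂ ≤ α)
    (x g : EuclideanSpace ℝ (Fin n)) (Hhat : Matrix (Fin n) (Fin n) ℝ)
    (xplus : EuclideanSpace ℝ (Fin n))
    (hmin : ∀ y : EuclideanSpace ℝ (Fin n),
      (∑ i, g i * (xplus - x) i) +
          (1 / 2) * (∑ i, ∑ j, (xplus - x) i * Hhat i j * (xplus - x) j) +
          (α / 6) * ‖xplus - x‖ ^ 3 ≤
        (∑ i, g i * (y - x) i) + (1 / 2) * (∑ i, ∑ j, (y - x) i * Hhat i j * (y - x) j) +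
          (α / 6) * ‖y - x‖ ^ 3) :
    (α / 36) * ‖xplus - x‖ ^ 3 ≤
      F x - F xplus + Real.sqrt (16 / (3 * α)) * ‖gradient F x - g‖ ^ ((3 : ℝ) / 2) +
        (24 / α ^ 2) * specNorm (HF x - Hhat) ^ 3 := by
  set s := xplus - x
  have hD2 : ∀ y, iteratedFDeriv ℝ 2 F y ![s, s] = ⟪s, toEuclideanCLM (𝕜 := ℝ) (HF y) s⟫ :=
    fun y => by rw [hHF, sum_sum_mul_mul_eq_inner_toEuclideanCLM]
  have hmodel : ⟪g, s⟫ + ⟪s, toEuclideanCLM (𝕜 := ℝ) Hhat s⟫ / 2 ≤ -(α / 4) * ‖s‖ ^ 3 :=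
    inner_add_half_inner_le_of_isMinOn_cubicModel fun y _ => by
      simpa [cubicModel, sum_mul_eq_inner, sum_sum_mul_mul_eq_inner_toEuclideanCLM]
        using hmin (x + y)
  have htaylor : F xplus ≤ F x + fderiv ℝ F x s + ⟪s, toEuclideanCLM (𝕜 := ℝ) (HF x) s⟫ / 2 +
      L₂ * ‖s‖ ^ 3 / 6 := by
    rw [← hD2, show xplus = x + s by simp [s]]
    exact hF.le_taylor_two_add x s fun t ht => by
      simpa only [hD2] using inner_toEuclideanCLM_add_smul_le hLip x s ht.1
  have hLα : L₂ * ‖s‖ ^ 3 ≤ α * ‖s‖ ^ 3 := by gcongr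
  have hgrad : fderiv ℝ F x s - ⟪g, s⟫ ≤ ‖gradient F x - g‖ * ‖s‖ := by
    rw [← inner_gradient_left, ← inner_sub_left]
    exact real_inner_le_norm _ _
  have hhess := inner_toEuclideanCLM_sub_inner_le (HF x) Hhat s
  have hyoung₁ := mul_le_cube_add_rpow_three_halves (norm_nonneg (gradient F x - g))
    (norm_nonneg s) hα
  have hyoung₂ := mul_sq_le_cube_add_cube (b := specNorm (HF x - Hhat)) (norm_nonneg _)
    (norm_nonneg s) hα
  linarith

/-- Let `F : ℝⁿ → ℝ` be twice continuously differentiable with `L₂`-Lipschitz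
Hessian (where `HF y` is the Hessian matrix of `F` at `y`), and let `α ≥ L₂`, `α > 0`.  Fix `x`,
`g` and a symmetric matrix `Ĥ`, and let `x⁺` be a global minimizer over `ℝⁿ` of the model
`f̂(y) = ⟨g, y−x⟩ + (1/2)⟨y−x, Ĥ(y−x)⟩ + (α/6)‖y−x‖³`.  Then
`(α/36)‖x⁺−x‖³ ≤ F(x) − F(x⁺) + √(16/(3α)) ‖∇F(x) − g‖^{3/2} + (24/α²)‖∇²F(x) − Ĥ‖³`. -/
theorem statement14 {n : ℕ} (F : EuclideanSpace ℝ (Fin n) → ℝ) (hF : ContDiff ℝ 2 F)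
    (HF : EuclideanSpace ℝ (Fin n) → Matrix (Fin n) (Fin n) ℝ)
    (hHF : ∀ (y : EuclideanSpace ℝ (Fin n)) (w₁ w₂ : EuclideanSpace ℝ (Fin n)),
      iteratedFDeriv ℝ 2 F y ![w₁, w₂] = ∑ i, ∑ j, w₁ i * HF y i j * w₂ j)
    (L₂ : ℝ) (hL₂ : 0 ≤ L₂)
    (hLip : ∀ x y : EuclideanSpace ℝ (Fin n), specNorm (HF x - HF y) ≤ L₂ * ‖x - y‖)
    (α : ℝ) (hα : 0 < α) (hαL : L₂ ≤ α)
    (x g : EuclideanSpace ℝ (Fin n)) (Hhat : Matrix (Fin n) (Fin n) ℝ) (hHhat : Hhat.IsSymm)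
    (xplus : EuclideanSpace ℝ (Fin n))
    (hmin : ∀ y : EuclideanSpace ℝ (Fin n),
      (∑ i, g i * (xplus - x) i) +
          (1 / 2) * (∑ i, ∑ j, (xplus - x) i * Hhat i j * (xplus - x) j) +
          (α / 6) * ‖xplus - x‖ ^ 3 ≤
        (∑ i, g i * (y - x) i) + (1 / 2) * (∑ i, ∑ j, (y - x) i * Hhat i j * (y - x) j) +
          (α / 6) * ‖y - x‖ ^ 3) :
    (α / 36) * ‖xplus - x‖ ^ 3 ≤
      F x - F xplus + Real.sqrt (16 / (3 * α)) * ‖gradient F x - g‖ ^ ((3 : ℝ) / 2) +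
        (24 / α ^ 2) * specNorm (HF x - Hhat) ^ 3 :=
  statement14_general F hF HF hHF L₂ hLip α hα hαL x g Hhat xplus hmin
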